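/- Let h > 1 and v ∈ [0,1]. Then (1-v) + v/h - h^(-v) ≤ L(1,h)·log S(h), where L(1,h) = (h-1)/log h and S(h) is the Specht ratio. -/

import Mathlib

/-!
Write `L = (h - 1) / log h`. Then `L · log S(h) = L log L + 1 - L = klFun L ≥ 0`. The left-hand
side is concave in `v`; bounding `h^(-v) = exp (-v log h)` below by the tangent line of `exp` at
`log (L / h)` kills the linear terms in `v` and gives the bound `klFun L / h` for every real `v`,
which is at most `klFun L` since `h ≥ 1`.
-/

open Real InformationTheory

lemma mul_sub_log_add_one_le_exp {a : ℝ} (ha : 0 < a) (y : ℝ) :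
    a * (y - log a + 1) ≤ exp y :=
  calc a * (y - log a + 1) ≤ a * exp (y - log a) := by gcongr; exact add_one_le_exp _
    _ = exp y := by rw [exp_sub, exp_log ha]; field_simp

lemma logMean_mul_log_spechtRatio {h : ℝ} (hh₀ : 0 < h) (hh₁ : h ≠ 1) :
    (h - 1) / log h * log (h ^ (1 / (h - 1)) / (exp 1 * ((1 / (h - 1)) * log h))) =
      klFun ((h - 1) / log h) := by
  have hsub : h - 1 ≠ 0 := sub_ne_zero.mpr hh₁
  have hlog : log h ≠ 0 := log_ne_zero_of_pos_of_ne_one hh₀ hh₁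
  have hinv : 1 / (h - 1) * log h = ((h - 1) / log h)⁻¹ := by field_simp
  rw [klFun_apply, hinv, log_div (by positivity) (by simp [hsub, hlog]),
    log_mul (exp_ne_zero 1) (by simp [hsub, hlog]), log_rpow hh₀, log_exp, log_inv]
  field_simp
  ring

lemma one_sub_add_div_sub_rpow_neg_le {h L : ℝ} (hh : 0 < h) (hL : 0 < L)
    (hLh : L * log h = h - 1) (v : ℝ) :
    (1 - v) + v / h - h ^ (-v) ≤ klFun L / h := by
  have htangent := mul_sub_log_add_one_le_exp (div_pos hL hh) (log h * -v)
  rw [← rpow_def_of_pos hh, log_div hL.ne' hh.ne'] at htangent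
  rw [le_div_iff₀ hh]
  calc (1 - v + v / h - h ^ (-v)) * h
      ≤ (1 - v + v / h - L / h * (log h * -v - (log L - log h) + 1)) * h := by gcongr
    _ = klFun L := by
      rw [klFun_apply]
      field_simp
      linear_combination (v - 1) * hLh

theorem stmt_9_general (h v : ℝ) (hh : 1 < h) :
    (1 - v) + v / h - h ^ (-v) ≤
      (h - 1) / Real.log h *
        Real.log (h ^ (1 / (h - 1)) /
          (Real.exp 1 * ((1 / (h - 1)) * Real.log h))) := by
  have hh₀ : 0 < h := by linarith
  set L := (h - 1) / log h
  have hL : 0 < L := div_pos (by linarith) (log_pos hh)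
  have hLh : L * log h = h - 1 := div_mul_cancel₀ _ (log_pos hh).ne'
  rw [logMean_mul_log_spechtRatio hh₀ hh.ne']
  calc (1 - v) + v / h - h ^ (-v) ≤ klFun L / h := one_sub_add_div_sub_rpow_neg_le hh₀ hL hLh v
    _ ≤ klFun L := div_le_self (klFun_nonneg hL.le) hh.le

theorem stmt_9 (h v : ℝ) (hh : 1 < h) (hv0 : 0 ≤ v) (hv1 : v ≤ 1) :
    (1 - v) + v / h - h ^ (-v) ≤
      (h - 1) / Real.log h *
        Real.log (h ^ (1 / (h - 1)) /
          (Real.exp 1 * ((1 / (h - 1)) * Real.log h))) :=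
  stmt_9_general h v hh
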